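/- Let J = {#₁, 1, 1̄, #₂, 2, 2̄, …, #_n, n, n̄} with total order #₁ < 1 < 1̄ < #₂ < 2 < 2̄ < ⋯ < #_n < n < n̄. A KT-tableau of shape with i boxes is a column of i entries from J, strictly increasing top to bottom, with the entry in row r at least #_r. Then the map s ↦ T(s) from the lattice points S(ϖ_i) of the orthosymplectic Dyck path polytope for the i-th fundamental weight of osp(1,2n) to the set of KT-tableaux with i boxes (defined by replacing entry r of the column (1,2,…,i) by s+1 if s_{α_{r,s}} ≠ 0, by s̄ if s_{α_{r,s̄}} ≠ 0, then replacing j by #_j if s_{δ_j} ≠ 0) is injective. -/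

import Mathlib

open scoped Classical

/-! Root combinatorics for `osp(1,2n)` (0-based indexing).
The positive even roots `α_{i,j} = α_i + ⋯ + α_j` (`1 ≤ i ≤ j ≤ n`) and
`α_{i,j̄} = α_i + ⋯ + α_n + α_{n-1} + ⋯ + α_j` (`1 ≤ i ≤ j ≤ n`, with
`α_{i,n̄} = α_{i,n}`) are encoded on a grid: `α_{i,j} ↦ (i-1, j-1)` and
`α_{i,j̄} ↦ (i-1, 2n-1-j)`, giving the set `{(r,c) : r ≤ c ≤ 2n-2-r}` of `n²` points.
In particular `2δ_i = α_{i,ī} ↦ (i-1, 2n-2-(i-1))` and the simple roots are the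
diagonal points `(i,i)`. The positive odd roots `δ_1,…,δ_n` are indexed by `Fin n`. -/

/-- The positive even roots of `osp(1,2n)`, as grid points. -/
abbrev EvenRoot (n : ℕ) :=
  {q : Fin n × Fin (2 * n - 1) // (q.1 : ℕ) ≤ (q.2 : ℕ) ∧ (q.2 : ℕ) ≤ 2 * n - 2 - (q.1 : ℕ)}

/-- Index set for the coordinates: positive even roots and positive odd roots `δ_1,…,δ_n`. -/
abbrev RootIdx (n : ℕ) := EvenRoot n ⊕ Fin n

/-- An orthosymplectic Dyck path: a monotone lattice path of positive even roots starting
at a simple root (a diagonal point) and either (a) ending at a simple even root `α_j`,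
`j < n` (`odd = false`), or (b) ending at `2δ_j` (an antidiagonal point), to which the odd
root `δ_i` (`i` the starting row) is appended (`odd = true`). -/
structure OSPath (n : ℕ) where
  len : ℕ
  p : Fin (len + 1) → EvenRoot n
  diag0 : ((p 0).1.1 : ℕ) = ((p 0).1.2 : ℕ)
  step : ∀ t : Fin len,
    (((p t.succ).1.1 : ℕ) = ((p t.castSucc).1.1 : ℕ) + 1 ∧
      ((p t.succ).1.2 : ℕ) = ((p t.castSucc).1.2 : ℕ)) ∨
    (((p t.succ).1.1 : ℕ) = ((p t.castSucc).1.1 : ℕ) ∧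
      ((p t.succ).1.2 : ℕ) = ((p t.castSucc).1.2 : ℕ) + 1)
  odd : Bool
  endc : if odd then ((p (Fin.last len)).1.2 : ℕ) = 2 * n - 2 - ((p (Fin.last len)).1.1 : ℕ)
    else ((p (Fin.last len)).1.1 : ℕ) = ((p (Fin.last len)).1.2 : ℕ) ∧
      ((p (Fin.last len)).1.1 : ℕ) + 1 < n

/-- The bound `M_p(λ)` for `λ = Σ m_i ϖ_i`: `m_i + ⋯ + m_j` for a path of type (a) from
`α_i` to `α_j`, and `m_i + ⋯ + m_n` for a path of type (b). -/
def OSPath.bound {n : ℕ} (P : OSPath n) (m : Fin n → ℕ) : ℕ :=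
  if P.odd then ∑ t ∈ Finset.univ.filter (fun t : Fin n => ((P.p 0).1.1 : ℕ) ≤ (t : ℕ)), m t
  else ∑ t ∈ Finset.univ.filter (fun t : Fin n =>
    ((P.p 0).1.1 : ℕ) ≤ (t : ℕ) ∧ (t : ℕ) ≤ ((P.p (Fin.last P.len)).1.1 : ℕ)), m t

/-- The sum `Σ_{α ∈ p} s_α` of the coordinates of `s` along the path. -/
def OSPath.pathSum {n : ℕ} (P : OSPath n) (s : RootIdx n → ℕ) : ℕ :=
  (∑ t, s (Sum.inl (P.p t))) + (if P.odd then s (Sum.inr (P.p 0).1.1) else 0)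

/-- The set `S(λ)` of lattice points of the orthosymplectic Dyck path polytope `P(λ)`. -/
def Sset (n : ℕ) (m : Fin n → ℕ) : Set (RootIdx n → ℕ) :=
  {s | (∀ P : OSPath n, P.pathSum s ≤ P.bound m) ∧ ∀ j : Fin n, s (Sum.inr j) ≤ 1}

/-- The exponent of `s` at the even grid point `(r,c)` (in ℕ-coordinates), `0` if `(r,c)`
is not a valid grid point. -/
def sval (n : ℕ) (s : RootIdx n → ℕ) (r c : ℕ) : ℕ :=
  if h : r < n ∧ c < 2 * n - 1 ∧ r ≤ c ∧ c ≤ 2 * n - 2 - r then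
    s (Sum.inl ⟨(⟨r, h.1⟩, ⟨c, h.2.1⟩), h.2.2.1, h.2.2.2⟩)
  else 0

/-- The exponent of `s` at the odd root `δ_{j+1}`, `0` if `j ≥ n`. -/
def oval (n : ℕ) (s : RootIdx n → ℕ) (j : ℕ) : ℕ :=
  if h : j < n then s (Sum.inr ⟨j, h⟩) else 0

/-- The entry (in the alphabet `Fin (3n)` with `#_{r+1} = 3r`, `r+1 = 3r+1`,
`(r+1)‾ = 3r+2`) placed in row `r` before the odd replacement: the entry `r+1` of the
column `(1,…,i)` is replaced by `s'+1` if `s_{α_{r+1,s'}} ≠ 0` (with `n+1 = n̄`) and by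
`s̄'` if `s_{α_{r+1,s̄'}} ≠ 0`; in grid coordinates, a nonzero entry at `(r,c)` yields
`c+2` (i.e. `3(c+1)+1`) if `c ≤ n-2`, `n̄` if `c = n-1`, and `(2n-1-c)‾` if `c ≥ n`. -/
noncomputable def erow (n : ℕ) (s : RootIdx n → ℕ) (r : ℕ) : ℕ :=
  if ∃ c, sval n s r c ≠ 0 then
    let c := sInf {c | sval n s r c ≠ 0}
    if c + 2 ≤ n then 3 * (c + 1) + 1 else if c + 1 = n then 3 * (n - 1) + 2
    else 3 * (2 * n - 2 - c) + 2
  else 3 * r + 1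

/-- The odd replacement: an entry `j` (encoded `3(j-1)+1`) is replaced by `#_j`
(encoded `3(j-1)`) whenever `s_{δ_j} ≠ 0`. -/
def oddRepl (n : ℕ) (s : RootIdx n → ℕ) (v : ℕ) : ℕ :=
  if v % 3 = 1 ∧ oval n s (v / 3) ≠ 0 then v - 1 else v

/-- The KT-tableau `T(s)` associated to `s`, as its (sorted) set of entries. -/
noncomputable def KTmap (n : ℕ) (i : ℕ) (s : RootIdx n → ℕ) : Finset ℕ :=
  (Finset.range i).image fun r => oddRepl n s (erow n s r)


/-! For `λ = ϖ_i` every Dyck path bound is `0` or `1`. The straight odd path along row `r`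
shows that row `r` carries at most one nonzero even coordinate, and none if `r > i` or
`s_{δ_r} ≠ 0`. The even hook `α_r → α_{r,c} → α_c` has bound `0` when `c < i`, so nonzero
coordinates sit in columns `c ≥ i`; odd hooks through two grid points show that the even
support is an antichain of `ℕ × ℕ`, i.e. a chain going strictly down and to the left.
Hence `T(s)` records the odd coordinates (entries `#_j`), the empty rows (untouched entries
`j` or `#_j`) and the occupied columns (entries coming from columns `≥ i`, which cannot
collide with the former). An antichain of `ℕ × ℕ` is determined by its two projections. -/

section Antichain

variable {α β : Type*} [LinearOrder α] [LinearOrder β] {s t : Set (α × β)}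

private lemma IsAntichain.mem_of_mem_of_image_eq (hs : IsAntichain (· ≤ ·) s)
    (ht : IsAntichain (· ≤ ·) t) (hfst : Prod.fst '' s = Prod.fst '' t)
    (hsnd : Prod.snd '' s = Prod.snd '' t) {a : α} {b : β}
    (ih : ∀ a' < a, ∀ b', (a', b') ∈ s ↔ (a', b') ∈ t) (hab : (a, b) ∈ s) : (a, b) ∈ t := by
  have mem_fst {u : Set (α × β)} {a : α} : a ∈ Prod.fst '' u ↔ ∃ b, (a, b) ∈ u := by simp
  have mem_snd {u : Set (α × β)} {b : β} : b ∈ Prod.snd '' u ↔ ∃ a, (a, b) ∈ u := by simp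
  obtain ⟨b', hab'⟩ := mem_fst.1 (hfst ▸ mem_fst.2 ⟨b, hab⟩)
  rcases lt_trichotomy b b' with hlt | rfl | hgt
  · obtain ⟨a'', h''⟩ := mem_snd.1 (hsnd ▸ mem_snd.2 ⟨a, hab'⟩)
    rcases lt_or_ge a'' a with ha | ha
    · exact absurd ⟨ha.le, le_rfl⟩ (ht ((ih a'' ha b').1 h'') hab' (by simp [ha.ne]))
    · exact absurd ⟨ha, hlt.le⟩ (hs hab h'' (by simp [hlt.ne]))
  · exact hab'
  · obtain ⟨a'', h''⟩ := mem_snd.1 (hsnd ▸ mem_snd.2 ⟨a, hab⟩)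
    rcases lt_or_ge a'' a with ha | ha
    · exact absurd ⟨ha.le, le_rfl⟩ (hs ((ih a'' ha b).2 h'') hab (by simp [ha.ne]))
    · exact absurd ⟨ha, hgt.le⟩ (ht hab' h'' (by simp [hgt.ne]))

/-- Inducting on the first coordinate, a point of `s` whose row is matched differently in `t`
would produce two comparable points in one of the antichains. -/
theorem IsAntichain.eq_of_image_fst_eq_of_image_snd_eq [WellFoundedLT α]
    (hs : IsAntichain (· ≤ ·) s) (ht : IsAntichain (· ≤ ·) t) (hfst : Prod.fst '' s = Prod.fst '' t)
    (hsnd : Prod.snd '' s = Prod.snd '' t) : s = t := by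
  suffices ∀ a b, (a, b) ∈ s ↔ (a, b) ∈ t from Set.ext fun ⟨a, b⟩ => this a b
  intro a
  induction a using WellFoundedLT.induction with
  | ind a ih =>
    exact fun b => ⟨hs.mem_of_mem_of_image_eq ht hfst hsnd ih,
      ht.mem_of_mem_of_image_eq hs hfst.symm hsnd.symm fun a' ha b' => (ih a' ha b').symm⟩

end Antichain

lemma sval_inl {n : ℕ} (s : RootIdx n → ℕ) (q : EvenRoot n) :
    sval n s q.1.1 q.1.2 = s (Sum.inl q) :=
  dif_pos ⟨q.1.1.2, q.1.2.2, q.2⟩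

lemma sval_support {n : ℕ} {s : RootIdx n → ℕ} {r c : ℕ} (h : sval n s r c ≠ 0) :
    r ≤ c ∧ c + r + 2 ≤ 2 * n := by
  unfold sval at h
  split_ifs at h with hv
  · omega
  · exact absurd rfl h

lemma oval_support {n : ℕ} {s : RootIdx n → ℕ} {j : ℕ} (h : oval n s j ≠ 0) : j < n := by
  unfold oval at h
  split_ifs at h with hj
  · exact hj
  · exact absurd rfl h

lemma oval_coe {n : ℕ} (s : RootIdx n → ℕ) (j : Fin n) : oval n s j = s (Sum.inr j) :=
  dif_pos j.2

namespace OSPath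

variable {n : ℕ} (P : OSPath n) (s : RootIdx n → ℕ)

lemma sval_le_pathSum (t : Fin (P.len + 1)) :
    sval n s (P.p t).1.1 (P.p t).1.2 ≤ P.pathSum s := by
  rw [sval_inl, pathSum]
  exact (Finset.single_le_sum (f := fun t => s (Sum.inl (P.p t))) (fun _ _ => Nat.zero_le _)
    (Finset.mem_univ t)).trans (Nat.le_add_right _ _)

lemma sval_add_oval_le_pathSum (hP : P.odd = true) (t : Fin (P.len + 1)) :
    sval n s (P.p t).1.1 (P.p t).1.2 + oval n s (P.p 0).1.1 ≤ P.pathSum s := by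
  rw [sval_inl, oval_coe, pathSum, if_pos hP]
  exact Nat.add_le_add_right (Finset.single_le_sum (f := fun t => s (Sum.inl (P.p t)))
    (fun _ _ => Nat.zero_le _) (Finset.mem_univ t)) _

lemma sval_add_sval_le_pathSum {t t' : Fin (P.len + 1)} (h : t ≠ t') :
    sval n s (P.p t).1.1 (P.p t).1.2 + sval n s (P.p t').1.1 (P.p t').1.2 ≤ P.pathSum s := by
  rw [sval_inl, sval_inl, pathSum, ← Finset.sum_pair (f := fun t => s (Sum.inl (P.p t))) h]
  exact (Finset.sum_le_sum_of_subset (Finset.subset_univ _)).trans (Nat.le_add_right _ _)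

lemma bound_single_of_odd (i : Fin n) (hP : P.odd = true) :
    P.bound (Pi.single i 1) = if ((P.p 0).1.1 : ℕ) ≤ i then 1 else 0 := by
  simp [bound, hP, Finset.sum_pi_single']

lemma bound_single_of_not_odd (i : Fin n) (hP : P.odd = false) :
    P.bound (Pi.single i 1) =
      if ((P.p 0).1.1 : ℕ) ≤ i ∧ (i : ℕ) ≤ (P.p (Fin.last P.len)).1.1 then 1 else 0 := by
  simp [bound, hP, Finset.sum_pi_single']

end OSPath

lemma hook_corner_bound {n r' e : ℕ} {odd : Bool}
    (hend : if odd then e + r' + 2 = 2 * n else r' = e ∧ r' + 1 < n) : e + r' + 2 ≤ 2 * n := by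
  cases odd <;> simp only [Bool.false_eq_true, if_true, if_false] at hend <;> omega

/-- The path that runs along row `r` to column `m`, down column `m` to row `r'`, and along
row `r'` to column `e`. -/
def hookPath (n r r' m e : ℕ) (odd : Bool) (hr : r ≤ r') (hr' : r' ≤ m) (hm : m ≤ e)
    (hend : if odd then e + r' + 2 = 2 * n else r' = e ∧ r' + 1 < n) : OSPath n where
  len := (m - r) + (r' - r) + (e - m)
  p t :=
    have := hook_corner_bound hend
    ⟨(⟨min (r + (t - (m - r))) r', by omega⟩,
      ⟨min (r + t) m + (t - (m - r + (r' - r))), by omega⟩), by dsimp only; omega,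
      by dsimp only; omega⟩
  diag0 := by simp only [Fin.val_zero]; omega
  step t := by dsimp only; simp only [Fin.val_succ, Fin.val_castSucc]; omega
  odd := odd
  endc := by
    cases odd <;> simp only [Bool.false_eq_true, if_true, if_false] at hend ⊢ <;>
      simp only [Fin.val_last] <;> omega

section hookPath

variable {n r r' m e : ℕ} {odd : Bool} {hr : r ≤ r'} {hr' : r' ≤ m} {hm : m ≤ e}
  {hend : if odd then e + r' + 2 = 2 * n else r' = e ∧ r' + 1 < n}

lemma hookPath_p_zero_fst : (((hookPath n r r' m e odd hr hr' hm hend).p 0).1.1 : ℕ) = r := by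
  simp only [hookPath, Fin.val_zero]; omega

lemma hookPath_visits_upper {c : ℕ} (hc : r ≤ c) (hcm : c ≤ m) :
    ∃ t, (((hookPath n r r' m e odd hr hr' hm hend).p t).1.1 : ℕ) = r ∧
      (((hookPath n r r' m e odd hr hr' hm hend).p t).1.2 : ℕ) = c :=
  ⟨⟨c - r, by simp only [hookPath]; omega⟩, by simp only [hookPath]; omega,
    by simp only [hookPath]; omega⟩

lemma hookPath_visits_lower {c : ℕ} (hc : m ≤ c) (hce : c ≤ e) :
    ∃ t, (((hookPath n r r' m e odd hr hr' hm hend).p t).1.1 : ℕ) = r' ∧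
      (((hookPath n r r' m e odd hr hr' hm hend).p t).1.2 : ℕ) = c :=
  ⟨⟨(m - r) + (r' - r) + (c - m), by simp only [hookPath]; omega⟩,
    by simp only [hookPath]; omega, by simp only [hookPath]; omega⟩

end hookPath

def evenSupport (n : ℕ) (s : RootIdx n → ℕ) : Set (ℕ × ℕ) := {q | sval n s q.1 q.2 ≠ 0}

section Polytope

variable {n : ℕ} {i : Fin n} {s : RootIdx n → ℕ} (hs : s ∈ Sset n (Pi.single i 1))
include hs

lemma sval_add_oval_le {r c : ℕ} (hrc : r ≤ c) (hc : c + r + 2 ≤ 2 * n) :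
    sval n s r c + oval n s r ≤ if r ≤ (i : ℕ) then 1 else 0 := by
  let P := hookPath n r r r (2 * n - 2 - r) true le_rfl le_rfl (by omega)
    (by simp only [if_true]; omega)
  obtain ⟨t, ht₁, ht₂⟩ : ∃ t, ((P.p t).1.1 : ℕ) = r ∧ ((P.p t).1.2 : ℕ) = c :=
    hookPath_visits_lower hrc (by omega)
  have hb := hs.1 P
  rw [P.bound_single_of_odd i rfl, hookPath_p_zero_fst] at hb
  have := P.sval_add_oval_le_pathSum s rfl t
  rw [ht₁, ht₂, hookPath_p_zero_fst] at this
  exact this.trans hb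

lemma row_le_of_sval_ne_zero {r c : ℕ} (h : sval n s r c ≠ 0) : r ≤ i := by
  have hrc := sval_support h
  have := sval_add_oval_le hs hrc.1 hrc.2
  split_ifs at this <;> omega

lemma le_of_oval_ne_zero {j : ℕ} (h : oval n s j ≠ 0) : j ≤ i := by
  have hj := oval_support h
  have := sval_add_oval_le hs le_rfl (show j + j + 2 ≤ 2 * n by omega)
  split_ifs at this <;> omega

lemma sval_eq_zero_of_oval_ne_zero {r : ℕ} (ho : oval n s r ≠ 0) (c : ℕ) : sval n s r c = 0 := by
  by_contra h
  have hrc := sval_support h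
  have := sval_add_oval_le hs hrc.1 hrc.2
  split_ifs at this <;> omega

lemma sval_le_one (r c : ℕ) : sval n s r c ≤ 1 := by
  by_cases h : sval n s r c = 0
  · omega
  have hrc := sval_support h
  have := sval_add_oval_le hs hrc.1 hrc.2
  split_ifs at this <;> omega

/-- Along the even path `α_r → α_{r,c} → α_c` the bound is `0` as soon as `c < i`. -/
lemma le_col_of_sval_ne_zero {r c : ℕ} (h : sval n s r c ≠ 0) : (i : ℕ) ≤ c := by
  by_contra hc
  have hrc := sval_support h
  let P := hookPath n r c c c false hrc.1 le_rfl le_rfl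
    (by simp only [Bool.false_eq_true, if_false, true_and]; omega)
  obtain ⟨t, ht₁, ht₂⟩ : ∃ t, ((P.p t).1.1 : ℕ) = r ∧ ((P.p t).1.2 : ℕ) = c :=
    hookPath_visits_upper hrc.1 le_rfl
  have hlast : ((P.p (Fin.last P.len)).1.1 : ℕ) = c := by
    simp only [P, hookPath, Fin.val_last]; omega
  have hb := hs.1 P
  rw [P.bound_single_of_not_odd i rfl, hookPath_p_zero_fst, hlast, if_neg (by omega)] at hb
  have := P.sval_le_pathSum s t
  rw [ht₁, ht₂] at this
  omega

/-- The odd path along row `r` to column `max c r'`, down to row `r'`, then along row `r'`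
passes through both `(r, c)` and `(r', c')`. -/
lemma sval_eq_zero_of_le_of_le {r r' c c' : ℕ} (h : sval n s r c ≠ 0) (hr : r ≤ r') (hc : c ≤ c')
    (hne : (r, c) ≠ (r', c')) : sval n s r' c' = 0 := by
  by_contra h'
  have hrc := sval_support h
  have hrc' := sval_support h'
  let P := hookPath n r r' (max c r') (2 * n - 2 - r') true hr (le_max_right _ _)
    (by omega) (by simp only [if_true]; omega)
  obtain ⟨t, ht₁, ht₂⟩ : ∃ t, ((P.p t).1.1 : ℕ) = r ∧ ((P.p t).1.2 : ℕ) = c :=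
    hookPath_visits_upper hrc.1 (le_max_left _ _)
  obtain ⟨t', ht₁', ht₂'⟩ : ∃ t, ((P.p t).1.1 : ℕ) = r' ∧ ((P.p t).1.2 : ℕ) = c' :=
    hookPath_visits_lower (max_le hc hrc'.1) (by omega)
  have htt' : t ≠ t' := by
    rintro rfl
    exact hne (Prod.ext (ht₁.symm.trans ht₁') (ht₂.symm.trans ht₂'))
  have hb := hs.1 P
  rw [P.bound_single_of_odd i rfl, hookPath_p_zero_fst] at hb
  have := P.sval_add_sval_le_pathSum s htt'
  rw [ht₁, ht₂, ht₁', ht₂'] at this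
  split_ifs at hb <;> omega

lemma col_eq_of_sval_ne_zero {r c c' : ℕ} (h : sval n s r c ≠ 0) (h' : sval n s r c' ≠ 0) :
    c = c' := by
  by_contra hne
  rcases le_total c c' with hle | hle
  · exact h' (sval_eq_zero_of_le_of_le hs h le_rfl hle (by simp [hne]))
  · exact h (sval_eq_zero_of_le_of_le hs h' le_rfl hle (by simp [Ne.symm hne]))

lemma isAntichain_evenSupport : IsAntichain (· ≤ ·) (evenSupport n s) := by
  rintro ⟨r, c⟩ h ⟨r', c'⟩ h' hne ⟨hr, hc⟩
  exact h' (sval_eq_zero_of_le_of_le hs h hr hc hne)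

end Polytope

/-- The value `erow` assigns to a row whose nonzero coordinate lies in column `c`. -/
def colEntry (n c : ℕ) : ℕ :=
  if c + 2 ≤ n then 3 * (c + 1) + 1 else if c + 1 = n then 3 * (n - 1) + 2
  else 3 * (2 * n - 2 - c) + 2

lemma colEntry_cases (n c : ℕ) :
    c + 2 ≤ n ∧ colEntry n c = 3 * (c + 1) + 1 ∨
      n ≤ c + 1 ∧ colEntry n c = 3 * (2 * n - 2 - c) + 2 := by
  unfold colEntry
  split_ifs <;> omega

lemma colEntry_injOn {n c c' : ℕ} (hc : c + 2 ≤ 2 * n) (hc' : c' + 2 ≤ 2 * n)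
    (h : colEntry n c = colEntry n c') : c = c' := by
  rcases colEntry_cases n c with ⟨_, e⟩ | ⟨_, e⟩ <;>
    rcases colEntry_cases n c' with ⟨_, e'⟩ | ⟨_, e'⟩ <;> omega

lemma oddRepl_erow_of_forall_sval_eq_zero {n : ℕ} {s : RootIdx n → ℕ} {r : ℕ}
    (h : ∀ c, sval n s r c = 0) :
    oddRepl n s (erow n s r) = if oval n s r ≠ 0 then 3 * r else 3 * r + 1 := by
  rw [erow, if_neg (by simpa using h), oddRepl, show (3 * r + 1) / 3 = r by omega]
  split_ifs <;> omega

section Decoding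

variable {n : ℕ} {i : Fin n} {s : RootIdx n → ℕ} (hs : s ∈ Sset n (Pi.single i 1))
include hs

lemma oddRepl_erow_of_sval_ne_zero {r c : ℕ} (h : sval n s r c ≠ 0) :
    oddRepl n s (erow n s r) = colEntry n c := by
  have hc : sInf {c | sval n s r c ≠ 0} = c :=
    col_eq_of_sval_ne_zero hs (Nat.sInf_mem (⟨c, h⟩ : {c | sval n s r c ≠ 0}.Nonempty)) h
  have hic := le_col_of_sval_ne_zero hs h
  rw [erow, if_pos ⟨c, h⟩]
  simp only [hc]
  change oddRepl n s (colEntry n c) = colEntry n c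
  rw [oddRepl, if_neg]
  rintro ⟨hmod, ho⟩
  rcases colEntry_cases n c with ⟨_, e⟩ | ⟨_, e⟩ <;> rw [e] at hmod ho
  · rw [show (3 * (c + 1) + 1) / 3 = c + 1 by omega] at ho
    have := le_of_oval_ne_zero hs ho
    omega
  · omega

lemma mem_KTmap_iff {w : ℕ} : w ∈ KTmap n ((i : ℕ) + 1) s ↔
    (∃ r ≤ (i : ℕ), (∀ c, sval n s r c = 0) ∧ w = if oval n s r ≠ 0 then 3 * r else 3 * r + 1) ∨
      ∃ r c, sval n s r c ≠ 0 ∧ w = colEntry n c := by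
  simp only [KTmap, Finset.mem_image, Finset.mem_range, Nat.lt_succ_iff]
  constructor
  · rintro ⟨r, hr, rfl⟩
    by_cases h : ∀ c, sval n s r c = 0
    · exact .inl ⟨r, hr, h, oddRepl_erow_of_forall_sval_eq_zero h⟩
    · obtain ⟨c, hc⟩ := not_forall.1 h
      exact .inr ⟨r, c, hc, oddRepl_erow_of_sval_ne_zero hs hc⟩
  · rintro (⟨r, hr, h, rfl⟩ | ⟨r, c, hc, rfl⟩)
    · exact ⟨r, hr, oddRepl_erow_of_forall_sval_eq_zero h⟩
    · exact ⟨r, row_le_of_sval_ne_zero hs hc, oddRepl_erow_of_sval_ne_zero hs hc⟩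

lemma oval_ne_zero_iff (j : ℕ) : oval n s j ≠ 0 ↔ 3 * j ∈ KTmap n ((i : ℕ) + 1) s := by
  rw [mem_KTmap_iff hs]
  constructor
  · intro ho
    exact .inl ⟨j, le_of_oval_ne_zero hs ho, sval_eq_zero_of_oval_ne_zero hs ho, by simp [ho]⟩
  · rintro (⟨r, -, -, hw⟩ | ⟨r, c, -, hw⟩)
    · split_ifs at hw with ho
      · rwa [show j = r by omega]
      · omega
    · rcases colEntry_cases n c with ⟨_, e⟩ | ⟨_, e⟩ <;> omega

lemma image_fst_evenSupport : Prod.fst '' evenSupport n s =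
    {r | r ≤ (i : ℕ) ∧ 3 * r ∉ KTmap n ((i : ℕ) + 1) s ∧ 3 * r + 1 ∉ KTmap n ((i : ℕ) + 1) s} := by
  ext r
  simp only [evenSupport, Set.mem_image, Set.mem_ofPred_eq, Prod.exists, exists_and_right,
    exists_eq_right]
  constructor
  · rintro ⟨c, hc⟩
    refine ⟨row_le_of_sval_ne_zero hs hc, fun hw => ?_, fun hw => ?_⟩
    · exact hc (sval_eq_zero_of_oval_ne_zero hs ((oval_ne_zero_iff hs r).2 hw) c)
    · rcases (mem_KTmap_iff hs).1 hw with ⟨r', -, h', hw⟩ | ⟨r', c', hc', hw⟩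
      · split_ifs at hw
        · omega
        · exact hc (show r = r' by omega ▸ h' c)
      · have := row_le_of_sval_ne_zero hs hc
        have := le_col_of_sval_ne_zero hs hc'
        rcases colEntry_cases n c' with ⟨_, e⟩ | ⟨_, e⟩ <;> omega
  · rintro ⟨hr, h₀, h₁⟩
    by_contra! h
    have := (mem_KTmap_iff hs).2 (.inl ⟨r, hr, h, rfl⟩)
    split_ifs at this
    exacts [h₀ this, h₁ this]

lemma image_snd_evenSupport : Prod.snd '' evenSupport n s =
    {c | (i : ℕ) ≤ c ∧ c + 2 ≤ 2 * n ∧ colEntry n c ∈ KTmap n ((i : ℕ) + 1) s} := by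
  ext c
  simp only [evenSupport, Set.mem_image, Set.mem_ofPred_eq, Prod.exists, exists_eq_right]
  constructor
  · rintro ⟨r, hc⟩
    have := sval_support hc
    exact ⟨le_col_of_sval_ne_zero hs hc, by omega, (mem_KTmap_iff hs).2 (.inr ⟨r, c, hc, rfl⟩)⟩
  · rintro ⟨hic, hc, hw⟩
    rcases (mem_KTmap_iff hs).1 hw with ⟨r, hr, -, hw⟩ | ⟨r, c', hc', hw⟩
    · rcases colEntry_cases n c with ⟨_, e⟩ | ⟨_, e⟩ <;> split_ifs at hw <;> omega
    · have := sval_support hc'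
      exact ⟨r, colEntry_injOn hc (by omega) hw ▸ hc'⟩

end Decoding

theorem stmt9_general (n : ℕ) (i : Fin n)
    (s s' : RootIdx n → ℕ)
    (hs : s ∈ Sset n (Pi.single i 1)) (hs' : s' ∈ Sset n (Pi.single i 1))
    (h : KTmap n ((i : ℕ) + 1) s = KTmap n ((i : ℕ) + 1) s') :
    s = s' := by
  have hsupp : evenSupport n s = evenSupport n s' :=
    (isAntichain_evenSupport hs).eq_of_image_fst_eq_of_image_snd_eq (isAntichain_evenSupport hs')
      (by rw [image_fst_evenSupport hs, image_fst_evenSupport hs', h])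
      (by rw [image_snd_evenSupport hs, image_snd_evenSupport hs', h])
  funext x
  rcases x with q | j
  · have hq : s (Sum.inl q) ≠ 0 ↔ s' (Sum.inl q) ≠ 0 := by
      simpa only [evenSupport, Set.mem_ofPred_eq, sval_inl] using
        Set.ext_iff.1 hsupp (q.1.1, q.1.2)
    have h₁ := sval_inl s q ▸ sval_le_one hs q.1.1 q.1.2
    have h₂ := sval_inl s' q ▸ sval_le_one hs' q.1.1 q.1.2
    omega
  · have hj := (oval_ne_zero_iff hs j).trans (h ▸ (oval_ne_zero_iff hs' j).symm)
    rw [oval_coe, oval_coe] at hj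
    have h₁ := hs.2 j
    have h₂ := hs'.2 j
    omega

/-- The map `s ↦ T(s)` from the lattice points `S(ϖ_i)` of the orthosymplectic Dyck path
polytope of `osp(1,2n)` to KT-tableaux with `i+1` boxes (`i : Fin n`, 0-based) is
injective. -/
theorem stmt9 (n : ℕ) (hn : 0 < n) (i : Fin n)
    (s s' : RootIdx n → ℕ)
    (hs : s ∈ Sset n (Pi.single i 1)) (hs' : s' ∈ Sset n (Pi.single i 1))
    (h : KTmap n ((i : ℕ) + 1) s = KTmap n ((i : ℕ) + 1) s') :
    s = s' :=
  stmt9_general n i s s' hs hs' h
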